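/- Let r ≥ 4 and let (G,s,p) be a target with s > 2. Then there exist e, f ∈ G with e ∩ f = {s}; moreover, every pair e, f ∈ G with e ∩ f = {s} satisfies e ∪ f = [s]. In particular s ≤ 2r − 1. -/

import Mathlib

open Finset

/-- The weight `w_p(e) = (r!/(r-|e|)!) · p_∞^{r-|e|} · ∏_{i ∈ e} p i` of a set `e ⊆ [s]`
with `|e| ≤ r`, where `q = p_∞`. -/
noncomputable def wissWeight (r : ℕ) (p : ℕ → ℝ) (q : ℝ) (e : Finset ℕ) : ℝ :=
  ((r.factorial : ℝ) / ((r - e.card).factorial : ℝ)) * q ^ (r - e.card) * ∏ i ∈ e, p i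

/-- The total weight `w_p(G) = ∑_{e ∈ G} w_p(e)`. -/
noncomputable def wissTotal (r : ℕ) (p : ℕ → ℝ) (q : ℝ) (G : Finset (Finset ℕ)) : ℝ :=
  ∑ e ∈ G, wissWeight r p q e

/-- `(G, s, p)` (with `q = p(∞)`) is a weighted intersecting set system:
`s ≥ 1`; `G` is an intersecting family of nonempty subsets of `[s] = {1, …, s}`,
each of size at most `r`; `p` takes values in `[0,1]` on `[s]`, is non-increasing on `[s]`,
and together with `q ∈ [0,1]` sums to `1`. -/
def IsWISS (r s : ℕ) (G : Finset (Finset ℕ)) (p : ℕ → ℝ) (q : ℝ) : Prop :=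
  1 ≤ s ∧
  (∀ e ∈ G, e.Nonempty ∧ e ⊆ Finset.Icc 1 s ∧ e.card ≤ r) ∧
  (∀ e ∈ G, ∀ f ∈ G, (e ∩ f).Nonempty) ∧
  (∀ i ∈ Finset.Icc 1 s, 0 ≤ p i ∧ p i ≤ 1) ∧
  (0 ≤ q ∧ q ≤ 1) ∧
  ((∑ i ∈ Finset.Icc 1 s, p i) + q = 1) ∧
  (∀ i j : ℕ, 1 ≤ i → i ≤ j → j ≤ s → p j ≤ p i)

/-- A weighted intersecting set system is principal if every member contains `1`. -/
def WISSPrincipal (G : Finset (Finset ℕ)) : Prop :=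
  ∀ e ∈ G, 1 ∈ e

/-- `L_r = (1 - 1/r)^{r-1}`. -/
noncomputable def Lr (r : ℕ) : ℝ := (1 - 1 / (r : ℝ)) ^ (r - 1)

/-- A non-principal w.i.s.s. `(G, s, p)` is a target if its weight is at least that of every
non-principal w.i.s.s. `(G', s', p')` with `s' ≤ s`, and whenever equality of weights holds
one has `s' = s`, `p s > 0`, and `∑_{e ∈ G} ∑_{i ∈ e} i ≤ ∑_{e' ∈ G'} ∑_{i ∈ e'} i`. -/
def IsTarget (r s : ℕ) (G : Finset (Finset ℕ)) (p : ℕ → ℝ) (q : ℝ) : Prop :=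
  IsWISS r s G p q ∧ ¬ WISSPrincipal G ∧
  ∀ (s' : ℕ) (G' : Finset (Finset ℕ)) (p' : ℕ → ℝ) (q' : ℝ),
    s' ≤ s → IsWISS r s' G' p' q' → ¬ WISSPrincipal G' →
    wissTotal r p' q' G' ≤ wissTotal r p q G ∧
    (wissTotal r p' q' G' = wissTotal r p q G →
      s' = s ∧ 0 < p s ∧ (∑ e ∈ G, ∑ i ∈ e, i) ≤ ∑ e ∈ G', ∑ i ∈ e, i)

/-! Two operations never lower the weight of a non-principal system: the shift replacing `b` by
some `a < b` in members (a UV-compression along singletons), which keeps the system intersecting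
and strictly lowers the sum of indices, and, when no two members meet exactly in `{s}`, deleting
`s` from all members and merging `p s` into `p_∞` (Bernoulli's inequality), which lowers `s`.
The tie-breaking clause in the definition of a target rules out both. Hence a pair meeting in
`{s}` exists, and if `e ∩ f = {s}` missed some `x < s`, shifting `s` to `x` inside `e` would give
a member disjoint from `f`; for `x = 1` the shift may make the system principal, which forces all
members avoiding `1` to contain `[2, s]`, contradicting `e ∩ f = {s}`. -/

open scoped FinsetFamily

namespace UV

theorem sum_compression {α M : Type*} [GeneralizedBooleanAlgebra α]
    [DecidableRel (@Disjoint α _ _)] [DecidableLE α] [DecidableEq α] [AddCommMonoid M]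
    (f : α → M) (u v : α) (s : Finset α) :
    ∑ x ∈ 𝓒 u v s, f x = ∑ a ∈ s, if compress u v a ∈ s then f a else f (compress u v a) := by
  rw [compression, sum_union compress_disjoint, filter_image, sum_image compress_injOn, sum_ite]

variable {α : Type*} [DecidableEq α] {a b : α} {g : Finset α}

theorem compress_singleton_of_notMem_of_mem (ha : a ∉ g) (hb : b ∈ g) :
    compress {a} {b} g = insert a (g.erase b) := by
  rw [compress_of_disjoint_of_le (disjoint_singleton_left.2 ha) (singleton_subset_iff.2 hb)]
  ext x
  simp only [mem_sdiff, mem_singleton, mem_insert, mem_erase]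
  grind

theorem compress_singleton_eq_self (h : ¬(a ∉ g ∧ b ∈ g)) : compress {a} {b} g = g := by
  rw [compress, if_neg]
  simpa [disjoint_singleton_left, singleton_subset_iff] using h

theorem notMem_and_mem_of_compress_singleton_ne (h : compress {a} {b} g ≠ g) : a ∉ g ∧ b ∈ g :=
  not_not.1 (mt compress_singleton_eq_self h)

theorem compress_singleton_subset_insert_erase (ha : a ∉ g) :
    compress {a} {b} g ⊆ insert a (g.erase b) := by
  by_cases hb : b ∈ g
  · rw [compress_singleton_of_notMem_of_mem ha hb]
  · rw [compress_singleton_eq_self (by tauto), erase_eq_of_notMem hb]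
    exact subset_insert _ _

theorem compress_singleton_subset_insert : compress {a} {b} g ⊆ insert a g := by
  by_cases ha : a ∈ g
  · rw [compress_singleton_eq_self (by tauto)]
    exact subset_insert _ _
  · exact (compress_singleton_subset_insert_erase ha).trans
      (insert_subset_insert _ (erase_subset _ _))

theorem sum_compress_singleton_lt {a b : ℕ} {g : Finset ℕ} (hab : a < b)
    (h : compress {a} {b} g ≠ g) : ∑ i ∈ compress {a} {b} g, i < ∑ i ∈ g, i := by
  obtain ⟨ha, hb⟩ := notMem_and_mem_of_compress_singleton_ne h
  rw [compress_singleton_of_notMem_of_mem ha hb, sum_insert fun hae => ha (mem_of_mem_erase hae)]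
  have := add_sum_erase g (fun i => i) hb
  omega

end UV

open UV

theorem Finset.intersecting_iff {α : Type*} [DecidableEq α] {G : Finset (Finset α)} :
    (G : Set (Finset α)).Intersecting ↔ ∀ e ∈ G, ∀ f ∈ G, (e ∩ f).Nonempty := by
  simp [Set.Intersecting, not_disjoint_iff_nonempty_inter]

theorem Set.Intersecting.uvCompression_singleton {α : Type*} [DecidableEq α] {a b : α}
    {G : Finset (Finset α)} (hG : (G : Set (Finset α)).Intersecting) :
    (𝓒 {a} {b} G : Set (Finset α)).Intersecting := by
  have moved : ∀ x ∈ G, compress {a} {b} x ∈ G → ∀ w ∈ G, compress {a} {b} w ∉ G →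
      ¬Disjoint x (compress {a} {b} w) := by
    intro x hx hcx w hw hcw
    obtain ⟨haw, hbw⟩ :=
      notMem_and_mem_of_compress_singleton_ne (ne_of_mem_of_not_mem hw hcw).symm
    rw [compress_singleton_of_notMem_of_mem haw hbw, Finset.not_disjoint_iff]
    by_cases hax : a ∈ x
    · exact ⟨a, hax, mem_insert_self _ _⟩
    -- a point of `compress x ∩ w` survives in `x ∩ compress w`, as it is neither `a` nor `b`
    obtain ⟨z, hzx, hzw⟩ := Finset.not_disjoint_iff.1 (hG hcx hw)
    have hz := compress_singleton_subset_insert_erase (b := b) hax hzx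
    grind
  intro x hx y hy
  rw [mem_coe, mem_compression] at hx hy
  obtain ⟨hx, hcx⟩ | ⟨hx, w, hw, rfl⟩ := hx <;> obtain ⟨hy, hcy⟩ | ⟨hy, w', hw', rfl⟩ := hy
  · exact hG hx hy
  · exact moved x hx hcx w' hw' hy
  · exact fun h => moved y hy hcy w hw hx h.symm
  · obtain ⟨haw, hbw⟩ :=
      notMem_and_mem_of_compress_singleton_ne (ne_of_mem_of_not_mem hw hx).symm
    obtain ⟨haw', hbw'⟩ :=
      notMem_and_mem_of_compress_singleton_ne (ne_of_mem_of_not_mem hw' hy).symm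
    rw [compress_singleton_of_notMem_of_mem haw hbw, compress_singleton_of_notMem_of_mem haw' hbw',
      Finset.not_disjoint_iff]
    exact ⟨a, mem_insert_self _ _, mem_insert_self _ _⟩

theorem Finset.disjoint_insert_erase_of_inter_eq_singleton {α : Type*} [DecidableEq α]
    {e f : Finset α} {s y : α} (hef : e ∩ f = {s}) (hy : y ∉ f) :
    Disjoint (insert y (e.erase s)) f := by
  rw [Finset.disjoint_left]
  intro z hz hzf
  have : z ∈ e ∩ f → z = s := by simp [hef]
  grind

section Weight

variable {r : ℕ} {p : ℕ → ℝ} {q : ℝ}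

theorem wissWeight_nonneg {e : Finset ℕ} (hq : 0 ≤ q) (hp : ∀ i ∈ e, 0 ≤ p i) :
    0 ≤ wissWeight r p q e := by
  have := prod_nonneg hp
  unfold wissWeight
  positivity

theorem wissWeight_mono_right {e : Finset ℕ} {q' : ℝ} (hq : 0 ≤ q) (hqq' : q ≤ q')
    (hp : ∀ i ∈ e, 0 ≤ p i) : wissWeight r p q e ≤ wissWeight r p q' e := by
  have := prod_nonneg hp
  unfold wissWeight
  gcongr

theorem wissWeight_le_compress {a b : ℕ} {g : Finset ℕ} (hq : 0 ≤ q) (hp : ∀ i ∈ g, 0 ≤ p i)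
    (hpab : p b ≤ p a) : wissWeight r p q g ≤ wissWeight r p q (compress {a} {b} g) := by
  by_cases h : a ∉ g ∧ b ∈ g
  · have hcard : #(compress {a} {b} g) = #g := card_compress (by simp) g
    have := prod_nonneg fun i (hi : i ∈ g.erase b) => hp i (mem_of_mem_erase hi)
    unfold wissWeight
    rw [hcard, compress_singleton_of_notMem_of_mem h.1 h.2, prod_insert (by simp [h.1]),
      ← mul_prod_erase g p h.2]
    gcongr
  · rw [compress_singleton_eq_self h]

/-- Bernoulli's inequality `q^(k+1) + (k+1) q^k t ≤ (q+t)^(k+1)` with `k + 1 = r - #h`,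
scaled by `r!/(k+1)! ∏_h p`. -/
theorem wissWeight_add_wissWeight_insert_le {x : ℕ} {h : Finset ℕ} (hx : x ∉ h) (hr : #h < r)
    (hq : 0 ≤ q) (hpx : 0 ≤ p x) (hp : ∀ i ∈ h, 0 ≤ p i) :
    wissWeight r p q h + wissWeight r p q (insert x h) ≤ wissWeight r p (q + p x) h := by
  obtain ⟨k, hk⟩ : ∃ k, r - #h = k + 1 := ⟨r - #h - 1, by omega⟩
  have hk' : r - #(insert x h) = k := by rw [card_insert_of_notMem hx]; omega
  have hfac : (r.factorial : ℝ) / k.factorial = (k + 1) * (r.factorial / (k + 1).factorial) := by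
    rw [Nat.factorial_succ]
    push_cast
    field_simp
  have := prod_nonneg hp
  unfold wissWeight
  rw [hk, hk', prod_insert hx, hfac]
  calc _ = (r.factorial / (k + 1).factorial : ℝ) * (q ^ (k + 1) + (k + 1) * q ^ k * p x) *
        ∏ i ∈ h, p i := by ring
    _ ≤ _ := by
      gcongr
      simpa using pow_add_mul_le_add_pow hq (by positivity : 0 ≤ 2 * q + p x) (k + 1)

end Weight

namespace IsWISS

variable {r s : ℕ} {G : Finset (Finset ℕ)} {p : ℕ → ℝ} {q : ℝ}

theorem compression (hW : IsWISS r s G p q) {a b : ℕ} (ha : 1 ≤ a) (has : a ≤ s) :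
    IsWISS r s (𝓒 {a} {b} G) p q := by
  obtain ⟨hs, hmem, hint, hrest⟩ := hW
  refine ⟨hs, fun x hx => ?_, ?_, hrest⟩
  · obtain ⟨hx, -⟩ | ⟨-, w, hw, rfl⟩ := mem_compression.1 hx
    · exact hmem x hx
    obtain ⟨hne, hsub, hcard⟩ := hmem w hw
    rw [← card_pos] at hne ⊢
    rw [card_compress (by simp)]
    refine ⟨hne, compress_singleton_subset_insert.trans (insert_subset ?_ hsub), hcard⟩
    exact mem_Icc.2 ⟨ha, has⟩
  · exact Finset.intersecting_iff.1 (Finset.intersecting_iff.2 hint).uvCompression_singleton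

theorem image_erase (hW : IsWISS r s G p q) (hs : 1 < s)
    (hno : ∀ e ∈ G, ∀ f ∈ G, e ∩ f ≠ {s}) :
    IsWISS r (s - 1) (G.image (·.erase s)) p (q + p s) := by
  obtain ⟨-, hmem, hint, hp01, hq01, hsum, hmono⟩ := hW
  have erase_nonempty (x : Finset ℕ) (hx : x.Nonempty) (hxs : x ≠ {s}) : (x.erase s).Nonempty :=
    nonempty_iff_ne_empty.2 <| by
      rw [Ne, erase_eq_empty_iff]
      exact not_or.2 ⟨hx.ne_empty, hxs⟩
  have hIcc : Icc 1 s = insert s (Icc 1 (s - 1)) := by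
    ext i; simp only [mem_Icc, mem_insert]; omega
  have hsub : Icc 1 (s - 1) ⊆ Icc 1 s := Icc_subset_Icc_right (by omega)
  have hps := (hp01 s (mem_Icc.2 ⟨by omega, le_rfl⟩)).1
  have hsum' : ∑ i ∈ Icc 1 (s - 1), p i + p s = ∑ i ∈ Icc 1 s, p i := by
    rw [hIcc, sum_insert fun hs' => by rw [mem_Icc] at hs'; omega, add_comm]
  refine ⟨by omega, ?_, ?_, fun i hi => hp01 i (hsub hi), ⟨add_nonneg hq01.1 hps, ?_⟩, by linarith,
    fun i j hi hij hj => hmono i j hi hij (by omega)⟩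
  · simp only [mem_image, forall_exists_index, and_imp]
    rintro _ g hg rfl
    obtain ⟨hne, hgs, hcard⟩ := hmem g hg
    refine ⟨erase_nonempty g hne (by simpa using hno g hg g hg), fun i hi => ?_,
      (card_erase_le).trans hcard⟩
    have := mem_Icc.1 (hgs (mem_of_mem_erase hi))
    exact mem_Icc.2 ⟨this.1, by have := ne_of_mem_erase hi; omega⟩
  · simp only [mem_image, forall_exists_index, and_imp]
    rintro _ g hg rfl _ g' hg' rfl
    rw [erase_inter, inter_erase, erase_idem]
    exact erase_nonempty _ (hint g hg g' hg') (hno g hg g' hg')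
  · have := sum_nonneg fun i (hi : i ∈ Icc 1 (s - 1)) => (hp01 i (hsub hi)).1
    linarith

theorem sum_erase_fiber_le (hW : IsWISS r s G p q) {h : Finset ℕ} (hsh : s ∉ h)
    (hh : h ⊆ Icc 1 s) :
    ∑ g ∈ G with g.erase s = h, wissWeight r p q g ≤ wissWeight r p (q + p s) h := by
  obtain ⟨hs, hmem, -, hp01, hq01, -⟩ := hW
  have hp : ∀ i ∈ insert s h, 0 ≤ p i :=
    fun i hi => (hp01 i (insert_subset (mem_Icc.2 ⟨hs, le_rfl⟩) hh hi)).1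
  have hps := hp s (mem_insert_self _ _)
  have hph : ∀ i ∈ h, 0 ≤ p i := fun i hi => hp i (mem_insert_of_mem hi)
  have hfiber : ∀ g, g.erase s = h → g = h ∨ g = insert s h := by
    intro g hg
    by_cases hsg : s ∈ g
    · exact Or.inr (by rw [← hg, insert_erase hsg])
    · exact Or.inl (by rw [← hg, erase_eq_of_notMem hsg])
  by_cases hins : insert s h ∈ G
  · have hcard : #h < r := by
      have := (hmem _ hins).2.2
      rw [card_insert_of_notMem hsh] at this
      omega
    calc _ ≤ ∑ g ∈ {h, insert s h}, wissWeight r p q g := by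
          refine sum_le_sum_of_subset_of_nonneg (fun g hg => ?_) fun g hg _ => ?_
          · simpa using hfiber g (mem_filter.1 hg).2
          · rcases mem_insert.1 hg with rfl | hg
            · exact wissWeight_nonneg hq01.1 hph
            · exact wissWeight_nonneg hq01.1 ((mem_singleton.1 hg) ▸ hp)
      _ = wissWeight r p q h + wissWeight r p q (insert s h) :=
          sum_pair (ne_insert_of_notMem _ _ hsh)
      _ ≤ _ := wissWeight_add_wissWeight_insert_le hsh hcard hq01.1 hps hph
  · calc _ ≤ ∑ g ∈ {h}, wissWeight r p q g := by
          refine sum_le_sum_of_subset_of_nonneg (fun g hg => ?_) fun g hg _ => ?_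
          · obtain ⟨hgG, hg⟩ := mem_filter.1 hg
            rcases hfiber g hg with rfl | rfl
            · exact mem_singleton_self _
            · exact absurd hgG hins
          · exact (mem_singleton.1 hg) ▸ wissWeight_nonneg hq01.1 hph
      _ = wissWeight r p q h := sum_singleton _ _
      _ ≤ _ := wissWeight_mono_right hq01.1 (le_add_of_nonneg_right hps) hph

theorem wissTotal_le_image_erase (hW : IsWISS r s G p q) :
    wissTotal r p q G ≤ wissTotal r p (q + p s) (G.image (·.erase s)) := by
  rw [wissTotal, wissTotal, ← sum_fiberwise_of_maps_to fun g hg => mem_image_of_mem (·.erase s) hg]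
  refine sum_le_sum fun h hh => ?_
  obtain ⟨g, hg, rfl⟩ := mem_image.1 hh
  exact hW.sum_erase_fiber_le (notMem_erase _ _) ((erase_subset _ _).trans (hW.2.1 g hg).2.1)

end IsWISS

namespace IsTarget

variable {r s : ℕ} {G : Finset (Finset ℕ)} {p : ℕ → ℝ} {q : ℝ}

theorem exists_one_notMem (hT : IsTarget r s G p q) : ∃ g ∈ G, 1 ∉ g := by
  simpa [WISSPrincipal] using hT.2.1

theorem compress_mem (hT : IsTarget r s G p q) {a b : ℕ} (ha : 1 ≤ a) (hab : a < b)
    (hbs : b ≤ s) (hnp : ¬WISSPrincipal (𝓒 {a} {b} G)) {g : Finset ℕ} (hg : g ∈ G) :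
    compress {a} {b} g ∈ G := by
  by_contra hcg
  obtain ⟨hW, -, hopt⟩ := hT
  obtain ⟨hle, htie⟩ := hopt s _ p q le_rfl (hW.compression ha (hab.le.trans hbs)) hnp
  obtain ⟨-, hmem, -, hp01, hq01, -, hmono⟩ := hW
  have hge : wissTotal r p q G ≤ wissTotal r p q (𝓒 {a} {b} G) := by
    rw [wissTotal, wissTotal, sum_compression]
    refine sum_le_sum fun w hw => ?_
    split_ifs
    · exact le_rfl
    · exact wissWeight_le_compress hq01.1 (fun i hi => (hp01 i ((hmem w hw).2.1 hi)).1)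
        (hmono a b ha hab.le hbs)
  have hlt : ∑ e ∈ 𝓒 {a} {b} G, ∑ i ∈ e, i < ∑ e ∈ G, ∑ i ∈ e, i := by
    rw [sum_compression]
    refine sum_lt_sum (fun w hw => ?_) ⟨g, hg, ?_⟩
    · split_ifs with hcw
      · exact le_rfl
      · exact (sum_compress_singleton_lt hab (ne_of_mem_of_not_mem hw hcw).symm).le
    · rw [if_neg hcg]
      exact sum_compress_singleton_lt hab (ne_of_mem_of_not_mem hg hcg).symm
  have := (htie (le_antisymm hle hge)).2.2
  omega

theorem insert_erase_mem (hT : IsTarget r s G p q) {a b : ℕ} (ha : 2 ≤ a) (hab : a < b)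
    (hbs : b ≤ s) {g : Finset ℕ} (hg : g ∈ G) (hbg : b ∈ g) (hag : a ∉ g) :
    insert a (g.erase b) ∈ G := by
  obtain ⟨g₀, hg₀, h1g₀⟩ := hT.exists_one_notMem
  have hnp : ¬WISSPrincipal (𝓒 {a} {b} G) := fun hP => by
    have := compress_singleton_subset_insert (hP _ (compress_mem_compression hg₀))
    rcases mem_insert.1 this with h | h
    · omega
    · exact h1g₀ h
  rw [← compress_singleton_of_notMem_of_mem hag hbg]
  exact hT.compress_mem (by omega) hab hbs hnp hg

theorem insert_one_erase_mem_or (hT : IsTarget r s G p q) {b : ℕ} (hb : 1 < b) (hbs : b ≤ s) :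
    (∀ g ∈ G, b ∈ g → 1 ∉ g → insert 1 (g.erase b) ∈ G) ∨ ∀ g ∈ G, 1 ∉ g → b ∈ g := by
  by_cases hnp : WISSPrincipal (𝓒 {1} {b} G)
  · refine Or.inr fun g hg h1g => ?_
    have h1 := hnp _ (compress_mem_compression hg)
    exact (notMem_and_mem_of_compress_singleton_ne fun h => h1g (h ▸ h1 :)).2
  · refine Or.inl fun g hg hbg h1g => ?_
    rw [← compress_singleton_of_notMem_of_mem h1g hbg]
    exact hT.compress_mem le_rfl hb hbs hnp hg

theorem mem_of_forall_one_notMem_imp_mem (hT : IsTarget r s G p q) {a b : ℕ}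
    (hall : ∀ g ∈ G, 1 ∉ g → b ∈ g) (ha : 2 ≤ a) (hab : a < b) (hbs : b ≤ s) {g : Finset ℕ}
    (hg : g ∈ G) (h1g : 1 ∉ g) : a ∈ g := by
  by_contra hag
  have hmem := hT.insert_erase_mem ha hab hbs hg (hall g hg h1g) hag
  have := hall _ hmem (by simp only [mem_insert, mem_erase, h1g, and_false, or_false]; omega)
  simp only [mem_insert, mem_erase, ne_eq, not_true_eq_false, false_and, or_false] at this
  omega

theorem exists_inter_eq_singleton (hT : IsTarget r s G p q) (hs : 1 < s) :
    ∃ e ∈ G, ∃ f ∈ G, e ∩ f = {s} := by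
  by_contra! hno
  obtain ⟨g₀, hg₀, h1g₀⟩ := hT.exists_one_notMem
  obtain ⟨hW, -, hopt⟩ := hT
  have hnp : ¬WISSPrincipal (G.image (·.erase s)) :=
    fun hP => h1g₀ (mem_of_mem_erase (hP _ (mem_image_of_mem _ hg₀)))
  obtain ⟨hle, htie⟩ := hopt (s - 1) _ p (q + p s) (by omega) (hW.image_erase hs hno) hnp
  have := (htie (le_antisymm hle hW.wissTotal_le_image_erase)).1
  omega

theorem union_eq_Icc_of_inter_eq_singleton (hT : IsTarget r s G p q) (hs : 2 < s)
    {e f : Finset ℕ} (he : e ∈ G) (hf : f ∈ G) (hef : e ∩ f = {s}) : e ∪ f = Icc 1 s := by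
  have hmem := hT.1.2.1
  have hint := hT.1.2.2.1
  refine (union_subset (hmem e he).2.1 (hmem f hf).2.1).antisymm fun x hx => ?_
  by_contra hxef
  rw [mem_union, not_or] at hxef
  have hsep (y : ℕ) (hy : y ∉ f) : insert y (e.erase s) ∉ G := fun hins =>
    not_disjoint_iff_nonempty_inter.2 (hint _ hins f hf)
      (disjoint_insert_erase_of_inter_eq_singleton hef hy)
  have hse : s ∈ e := (mem_inter.1 (hef ▸ mem_singleton_self s)).1
  have hxs : x < s := lt_of_le_of_ne (mem_Icc.1 hx).2 fun h => hxef.1 (h ▸ hse)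
  obtain rfl | hx2 : x = 1 ∨ 2 ≤ x := by have := (mem_Icc.1 hx).1; omega
  · rcases hT.insert_one_erase_mem_or (by omega) le_rfl with hshift | hall
    · exact hsep 1 hxef.2 (hshift e he hse hxef.1)
    · have h2 : 2 ∈ e ∩ f := mem_inter.2
        ⟨hT.mem_of_forall_one_notMem_imp_mem hall le_rfl hs le_rfl he hxef.1,
          hT.mem_of_forall_one_notMem_imp_mem hall le_rfl hs le_rfl hf hxef.2⟩
      rw [hef, mem_singleton] at h2
      omega
  · exact hsep x hxef.2 (hT.insert_erase_mem hx2 hxs le_rfl he hse hxef.1)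

end IsTarget

theorem target_pair_meeting_in_s_general (r s : ℕ) (hs : 2 < s)
    (G : Finset (Finset ℕ)) (p : ℕ → ℝ) (q : ℝ) (hT : IsTarget r s G p q) :
    (∃ e ∈ G, ∃ f ∈ G, e ∩ f = {s}) ∧
    (∀ e ∈ G, ∀ f ∈ G, e ∩ f = {s} → e ∪ f = Finset.Icc 1 s) ∧
    s ≤ 2 * r - 1 := by
  have hunion (e) (he : e ∈ G) (f) (hf : f ∈ G) (hef : e ∩ f = {s}) : e ∪ f = Icc 1 s :=
    hT.union_eq_Icc_of_inter_eq_singleton hs he hf hef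
  obtain ⟨e, he, f, hf, hef⟩ := hT.exists_inter_eq_singleton (by omega)
  refine ⟨⟨e, he, f, hf, hef⟩, hunion, ?_⟩
  have hcard := card_union_add_card_inter e f
  rw [hunion e he f hf hef, hef, Nat.card_Icc, card_singleton] at hcard
  have := (hT.1.2.1 e he).2.2
  have := (hT.1.2.1 f hf).2.2
  omega

theorem target_pair_meeting_in_s (r s : ℕ) (hr : 4 ≤ r) (hs : 2 < s)
    (G : Finset (Finset ℕ)) (p : ℕ → ℝ) (q : ℝ) (hT : IsTarget r s G p q) :
    (∃ e ∈ G, ∃ f ∈ G, e ∩ f = {s}) ∧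
    (∀ e ∈ G, ∀ f ∈ G, e ∩ f = {s} → e ∪ f = Finset.Icc 1 s) ∧
    s ≤ 2 * r - 1 :=
  target_pair_meeting_in_s_general r s hs G p q hT
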